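/- arXiv:1310.2964 — 4 statements merged into one kernel-verified Lean document; each statement's English description precedes it below -/
import Mathlib

section
/- Let S ≥ 2, utilities u₁ ≤ ... ≤ u_S with u_s ≥ 0, objective probabilities p_s > 0 summing to 1, and subjective probabilities q_s ≥ 0 summing to 1. Let m = Σ_s q_s u_s, P₊ = Σ_{s: u_s ≥ m} p_s, and U = Σ_s q_s u_s + η Σ_s p_s μ(u_s − m) where μ(x)=x for x≥0 and μ(x)=λx for x<0, λ>1, 0<η≤1. Then at any point where no u_s equals m, the partial derivative of U with respect to q_k (k ∈ S) equals u_k·(1 − ηP₊ − ηλ(1−P₊)) = u_k·η(λ−1)·(P₊ − P*), with P* = (ηλ−1)/(η(λ−1)). -/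
open Finset

/-- Piecewise-linear loss-averse gain-loss utility. -/
noncomputable def mu (lam x : ℝ) : ℝ := if 0 ≤ x then x else lam * x

/-- In the multi-state model, at any belief profile q where no payoff utility
equals the subjective expectation m = Σ q_s u_s, the partial derivative of the
total utility U with respect to q_k equals
u_k·(1 − ηP₊ − ηλ(1−P₊)) = u_k·η(λ−1)·(P₊ − P*). -/
theorem stmt_6 (S : ℕ) (hS : 2 ≤ S) (lam eta : ℝ) (hlam : 1 < lam)
    (heta0 : 0 < eta) (heta1 : eta ≤ 1)
    (u p : Fin S → ℝ) (hu_mono : Monotone u) (hu_nonneg : ∀ s, 0 ≤ u s)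
    (hp_pos : ∀ s, 0 < p s) (hp_sum : ∑ s, p s = 1)
    (q : Fin S → ℝ) (hq_nonneg : ∀ s, 0 ≤ q s) (hq_sum : ∑ s, q s = 1)
    (U : (Fin S → ℝ) → ℝ)
    (hU : ∀ q', U q' = (∑ s, q' s * u s) +
      eta * ∑ s, p s * mu lam (u s - ∑ t, q' t * u t))
    (m : ℝ) (hm : m = ∑ s, q s * u s)
    (Pplus : ℝ) (hPplus : Pplus = ∑ s ∈ Finset.univ.filter (fun s => m ≤ u s), p s)
    (Pstar : ℝ) (hPstar : Pstar = (eta * lam - 1) / (eta * (lam - 1)))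
    (hsep : ∀ s, u s ≠ m) (k : Fin S) :
    HasDerivAt (fun t => U (Function.update q k t))
      (u k * (1 - eta * Pplus - eta * lam * (1 - Pplus))) (q k) ∧
    u k * (1 - eta * Pplus - eta * lam * (1 - Pplus)) =
      u k * (eta * (lam - 1) * (Pplus - Pstar)) := by
  have hlam1 : (0:ℝ) < lam - 1 := by linarith
  have hne : eta * (lam - 1) ≠ 0 := by positivity
  constructor
  · -- derivative part
    set c : Fin S → ℝ := fun s => if m ≤ u s then 1 else lam with hc
    have hne' : (Finset.univ : Finset (Fin S)).Nonempty := ⟨⟨0, by omega⟩, mem_univ _⟩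
    set δ : ℝ := Finset.univ.inf' hne' (fun s => |u s - m|) with hδdef
    have hδ : 0 < δ := by
      rw [hδdef, Finset.lt_inf'_iff]
      intro s _
      exact abs_pos.mpr (sub_ne_zero.mpr (hsep s))
    have hδle : ∀ s : Fin S, δ ≤ |u s - m| := fun s =>
      Finset.inf'_le _ (mem_univ s)
    set ε : ℝ := δ / (|u k| + 1) with hεdef
    have hε : 0 < ε := by
      apply div_pos hδ; positivity
    have hM : ∀ t : ℝ, ∑ s, Function.update q k t s * u s = m + (t - q k) * u k := by
      intro t
      have h1 : ∀ s ∈ (Finset.univ : Finset (Fin S)),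
          Function.update q k t s * u s
            = Function.update (fun s => q s * u s) k (t * u k) s := by
        intro s _
        by_cases h : s = k
        · subst h; simp
        · simp [Function.update_of_ne h]
      rw [Finset.sum_congr rfl h1, Finset.sum_update_of_mem (mem_univ k)]
      have h2 : ∑ s ∈ Finset.univ \ {k}, q s * u s = m - q k * u k := by
        have h3 := Finset.sum_eq_sum_sdiff_singleton_add (mem_univ k) (fun s => q s * u s)
        rw [hm]; linarith
      rw [h2]; ring
    have hsumc : ∑ s, p s * c s = Pplus + lam * (1 - Pplus) := by
      have hsplit := Finset.sum_filter_add_sum_filter_not Finset.univ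
        (fun s => m ≤ u s) (fun s => p s * c s)
      have h1 : ∑ s ∈ Finset.univ.filter (fun s => m ≤ u s), p s * c s
          = Pplus := by
        rw [hPplus]
        apply Finset.sum_congr rfl
        intro s hs
        rw [Finset.mem_filter] at hs
        simp [hc, hs.2]
      have h2 : ∑ s ∈ Finset.univ.filter (fun s => ¬ m ≤ u s), p s * c s
          = lam * (1 - Pplus) := by
        have hp2 := Finset.sum_filter_add_sum_filter_not Finset.univ
          (fun s => m ≤ u s) p
        rw [hp_sum] at hp2
        have h4 : ∑ s ∈ Finset.univ.filter (fun s => ¬ m ≤ u s), p s * c s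
            = lam * ∑ s ∈ Finset.univ.filter (fun s => ¬ m ≤ u s), p s := by
          rw [Finset.mul_sum]
          apply Finset.sum_congr rfl
          intro s hs
          rw [Finset.mem_filter] at hs
          simp only [hc, hs.2, if_false]
          ring
        have h5 : ∑ s ∈ Finset.univ.filter (fun s => ¬ m ≤ u s), p s
            = 1 - ∑ s ∈ Finset.univ.filter (fun s => m ≤ u s), p s := by linarith
        rw [h4, h5, hPplus]
      rw [← hsplit, h1, h2]
    set b : ℝ := u k - eta * (∑ s, p s * c s) * u k with hb
    set a : ℝ := (m - q k * u k) + eta * ∑ s, p s * (c s * (u s - m + q k * u k)) with ha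
    have hbD : b = u k * (1 - eta * Pplus - eta * lam * (1 - Pplus)) := by
      rw [hb, hsumc]; ring
    rw [← hbD]
    have hg : HasDerivAt (fun t : ℝ => a + b * t) b (q k) := by
      simpa using ((hasDerivAt_id (q k)).const_mul b).const_add a
    apply hg.congr_of_eventuallyEq
    filter_upwards [Metric.ball_mem_nhds (q k) hε] with t ht
    rw [Metric.mem_ball, Real.dist_eq] at ht
    -- the perturbation of the expectation
    have hept : |(t - q k) * u k| < δ := by
      rw [abs_mul]
      calc |t - q k| * |u k| ≤ |t - q k| * (|u k| + 1) := by
            apply mul_le_mul_of_nonneg_left (by linarith) (abs_nonneg _)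
        _ < ε * (|u k| + 1) := by
            apply mul_lt_mul_of_pos_right ht (by positivity)
        _ = δ := by
            rw [hεdef]; field_simp
    set e : ℝ := (t - q k) * u k with hedef
    have hmu : ∀ s : Fin S, mu lam (u s - (m + e)) = c s * (u s - (m + e)) := by
      intro s
      have hds := hδle s
      have heabs := abs_lt.mp hept
      unfold mu
      by_cases hms : m ≤ u s
      · have hpos : 0 < u s - m := lt_of_le_of_ne (by linarith) (Ne.symm (sub_ne_zero.mpr (hsep s)))
        have : δ ≤ u s - m := by
          rw [abs_of_pos hpos] at hds; exact hds
        rw [if_pos (by linarith), hc]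
        simp [hms]
      · have hneg : u s - m < 0 := by
          push_neg at hms; linarith
        have : u s - m ≤ -δ := by
          rw [abs_of_neg hneg] at hds; linarith
        rw [if_neg (by push_neg; linarith), hc]
        simp [hms]
    have hUt := hU (Function.update q k t)
    rw [hUt, hM t]
    simp only [← hedef]
    rw [Finset.sum_congr rfl (fun s _ => by rw [hmu s])]
    have hsplit : ∑ s, p s * (c s * (u s - (m + e)))
        = (∑ s, p s * (c s * (u s - m + q k * u k))) - (∑ s, p s * c s) * (t * u k) := by
      rw [eq_sub_iff_add_eq, Finset.sum_mul, ← Finset.sum_add_distrib]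
      apply Finset.sum_congr rfl
      intro s _
      rw [hedef]; ring
    rw [hsplit, ha, hb, hedef]
    ring
  · have h : eta * (lam - 1) * (Pplus - Pstar) = 1 - eta * Pplus - eta * lam * (1 - Pplus) := by
      rw [hPstar]
      field_simp
      ring
    rw [h]
end

section
/- Let S ≥ 2, utilities u₁ ≤ ... ≤ u_S, objective probabilities p_s summing to 1, and let q_s be subjective probabilities summing to 1 with subjective expectation m = Σ_s q_s u_s. Let A = {s : u_s ≥ m} and suppose Σ_{s∈A} p_s = P* = (ηλ−1)/(η(λ−1)). Then the total utility U = m + η[Σ_{s∈A} p_s (u_s − m) + λ Σ_{s∉A} p_s (u_s − m)] equals η[Σ_{s∈A} p_s u_s + λ Σ_{s∉A} p_s u_s]; in particular U does not depend on the anticipation m (only on the induced partition A). -/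
open Finset

/-! At the cutoff `P*` the anticipation `m` enters the total utility with coefficient
`1 - η (P* + λ (1 - P*)) = 0`: the term `m` is exactly cancelled by the gain-loss
component. -/

theorem sum_mul_sub_add_mul_sum_compl_mul_sub {ι : Type*} [Fintype ι] [DecidableEq ι]
    (A : Finset ι) (p u : ι → ℝ) (m lam : ℝ) :
    (∑ s ∈ A, p s * (u s - m)) + lam * ∑ s ∈ Aᶜ, p s * (u s - m) =
      (∑ s ∈ A, p s * u s) + lam * (∑ s ∈ Aᶜ, p s * u s)
        - ((∑ s ∈ A, p s) + lam * ∑ s ∈ Aᶜ, p s) * m := by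
  simp only [mul_sub, sum_sub_distrib, ← sum_mul]
  ring

theorem mul_add_mul_one_sub_eq_one_of_eq_cutoff {P eta lam : ℝ} (heta : eta ≠ 0)
    (hlam : lam ≠ 1) (hP : P = (eta * lam - 1) / (eta * (lam - 1))) :
    eta * (P + lam * (1 - P)) = 1 := by
  have hlam' : lam - 1 ≠ 0 := sub_ne_zero.mpr hlam
  subst hP
  field_simp
  ring

theorem stmt_7_general (S : ℕ) (lam eta : ℝ) (hlam : 1 < lam)
    (heta0 : 0 < eta)
    (u p : Fin S → ℝ)
    (hp_sum : ∑ s, p s = 1)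
    (m : ℝ)
    (A : Finset (Fin S))
    (hcut : ∑ s ∈ A, p s = (eta * lam - 1) / (eta * (lam - 1)))
    (U : ℝ) (hU : U = m + eta * ((∑ s ∈ A, p s * (u s - m)) +
      lam * ∑ s ∈ Aᶜ, p s * (u s - m))) :
    U = eta * ((∑ s ∈ A, p s * u s) + lam * ∑ s ∈ Aᶜ, p s * u s) := by
  have hcompl : ∑ s ∈ Aᶜ, p s = 1 - ∑ s ∈ A, p s := by
    rw [← hp_sum, ← sum_add_sum_compl A p]
    ring
  have hweight : eta * ((∑ s ∈ A, p s) + lam * ∑ s ∈ Aᶜ, p s) = 1 := by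
    rw [hcompl]
    exact mul_add_mul_one_sub_eq_one_of_eq_cutoff heta0.ne' hlam.ne' hcut
  rw [hU, sum_mul_sub_add_mul_sum_compl_mul_sub]
  linear_combination -m * hweight

/-- When the gain-region objective probability equals the cutoff P*, total
utility equals η[Σ_{A} p_s u_s + λ Σ_{Aᶜ} p_s u_s], independent of the
anticipation m. -/
theorem stmt_7 (S : ℕ) (hS : 2 ≤ S) (lam eta : ℝ) (hlam : 1 < lam)
    (heta0 : 0 < eta) (heta1 : eta ≤ 1)
    (u p : Fin S → ℝ) (hu_mono : Monotone u)
    (hp_sum : ∑ s, p s = 1)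
    (q : Fin S → ℝ) (hq_nonneg : ∀ s, 0 ≤ q s) (hq_sum : ∑ s, q s = 1)
    (m : ℝ) (hm : m = ∑ s, q s * u s)
    (A : Finset (Fin S)) (hA : A = Finset.univ.filter (fun s => m ≤ u s))
    (hcut : ∑ s ∈ A, p s = (eta * lam - 1) / (eta * (lam - 1)))
    (U : ℝ) (hU : U = m + eta * ((∑ s ∈ A, p s * (u s - m)) +
      lam * ∑ s ∈ Aᶜ, p s * (u s - m))) :
    U = eta * ((∑ s ∈ A, p s * u s) + lam * ∑ s ∈ Aᶜ, p s * u s) :=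
  stmt_7_general S lam eta hlam heta0 u p hp_sum m A hcut U hU
end

section
/- Under the multi-state FOC characterization, for any two states k > l (so u_k > u_l) and any feasible beliefs with P₊ > P* (respectively P₊ < P*), transferring a sufficiently small probability ε > 0 from state l to state k (respectively from k to l) strictly increases total utility U, provided the transfer does not change the set A = {s : u_s ≥ Σ q_s u_s}. -/
open Finset

lemma mu_diff (lam a m m' : ℝ) (h : m ≤ a ↔ m' ≤ a) :
    mu lam (a - m') - mu lam (a - m) = (m - m') * (if m ≤ a then 1 else lam) := by
  by_cases hc : m ≤ a
  · have hc' : m' ≤ a := h.mp hc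
    simp only [mu, if_pos (sub_nonneg.mpr hc), if_pos (sub_nonneg.mpr hc'), if_pos hc]
    ring
  · have hc' : ¬ m' ≤ a := fun hh => hc (h.mpr hh)
    simp only [mu, if_neg (fun hh => hc (sub_nonneg.mp hh)),
      if_neg (fun hh => hc' (sub_nonneg.mp hh)), if_neg hc]
    ring

/-- Transferring a small probability ε from a lower state l to a higher state
k strictly increases total utility when P₊ > P* (and the reverse transfer does
so when P₊ < P*), provided the transfer leaves the gain set A unchanged. -/
theorem stmt_8 (S : ℕ) (hS : 2 ≤ S) (lam eta : ℝ) (hlam : 1 < lam)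
    (heta0 : 0 < eta) (heta1 : eta ≤ 1)
    (u p : Fin S → ℝ) (hu_mono : Monotone u) (hu_pos : ∀ s, 0 < u s)
    (hp_pos : ∀ s, 0 < p s) (hp_sum : ∑ s, p s = 1)
    (q : Fin S → ℝ) (hq_nonneg : ∀ s, 0 ≤ q s) (hq_sum : ∑ s, q s = 1)
    (k l : Fin S) (hkl : k ≠ l) (hukl : u l < u k)
    (U : (Fin S → ℝ) → ℝ)
    (hU : ∀ q', U q' = (∑ s, q' s * u s) +
      eta * ∑ s, p s * mu lam (u s - ∑ t, q' t * u t))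
    (A : (Fin S → ℝ) → Finset (Fin S))
    (hA : ∀ q', A q' = Finset.univ.filter (fun s => (∑ t, q' t * u t) ≤ u s))
    (Pplus Pstar : ℝ)
    (hPplus : Pplus = ∑ s ∈ A q, p s)
    (hPstar : Pstar = (eta * lam - 1) / (eta * (lam - 1))) :
    -- transfer ε from l to k when P₊ > P*
    (Pstar < Pplus → ∀ ε : ℝ, 0 < ε →
      ∀ q' : Fin S → ℝ,
        (q' = fun s => if s = k then q k + ε else if s = l then q l - ε else q s) →
        A q' = A q → U q < U q') ∧
    -- transfer ε from k to l when P₊ < P*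
    (Pplus < Pstar → ∀ ε : ℝ, 0 < ε →
      ∀ q' : Fin S → ℝ,
        (q' = fun s => if s = k then q k - ε else if s = l then q l + ε else q s) →
        A q' = A q → U q < U q') := by
  set m : ℝ := ∑ t, q t * u t with hm
  -- total weight in the ite sum
  have hW : ∑ s, p s * (if m ≤ u s then 1 else lam) = Pplus + lam * (1 - Pplus) := by
    have h1 : ∑ s ∈ Finset.univ.filter (fun s => m ≤ u s), p s = Pplus := by
      rw [hPplus, hA]
    have h2 : ∑ s ∈ Finset.univ.filter (fun s => ¬ m ≤ u s), p s = 1 - Pplus := by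
      have h3 := Finset.sum_filter_add_sum_filter_not Finset.univ (fun s => m ≤ u s) p
      rw [hp_sum, h1] at h3
      linarith
    simp only [mul_ite, mul_one]
    rw [Finset.sum_ite, h1, ← Finset.sum_mul, h2]
    ring
  -- the key difference formula
  have key : ∀ q' : Fin S → ℝ, A q' = A q →
      U q' - U q = ((∑ s, q' s * u s) - m) * (1 - eta * (Pplus + lam * (1 - Pplus))) := by
    intro q' hAq
    set m' : ℝ := ∑ t, q' t * u t with hm'
    have hiff : ∀ s, m ≤ u s ↔ m' ≤ u s := by
      intro s
      have h1 : s ∈ A q' ↔ s ∈ A q := by rw [hAq]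
      rw [hA, hA, Finset.mem_filter, Finset.mem_filter] at h1
      simpa using h1.symm
    have hsum : ∑ s, p s * mu lam (u s - m') - ∑ s, p s * mu lam (u s - m)
        = (m - m') * ∑ s, p s * (if m ≤ u s then 1 else lam) := by
      rw [← Finset.sum_sub_distrib, Finset.mul_sum]
      refine Finset.sum_congr rfl fun s _ => ?_
      have h := mu_diff lam (u s) m m' (hiff s)
      by_cases hc : m ≤ u s <;> simp only [if_pos, if_neg, hc, if_true, if_false] at h ⊢ <;>
        linear_combination p s * h
    rw [hU q', hU q, ← hm, ← hm', hW] at *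
    linear_combination eta * hsum
  have hden : 0 < eta * (lam - 1) := mul_pos heta0 (by linarith)
  constructor
  · intro hP ε hε q' hq' hAq
    have hm'val : (∑ s, q' s * u s) = m + ε * (u k - u l) := by
      have hpt : ∀ s : Fin S, q' s * u s
          = q s * u s + (if s = k then ε * u s else 0) - (if s = l then ε * u s else 0) := by
        intro s
        by_cases h1 : s = k
        · subst h1; rw [hq']; simp [hkl]; ring
        · by_cases h2 : s = l
          · subst h2; rw [hq']; simp [h1]; ring
          · rw [hq']; simp [h1, h2]
      rw [Finset.sum_congr rfl fun s _ => hpt s]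
      rw [Finset.sum_sub_distrib, Finset.sum_add_distrib,
        Finset.sum_ite_eq' Finset.univ k (fun s => ε * u s),
        Finset.sum_ite_eq' Finset.univ l (fun s => ε * u s)]
      simp [hm]; ring
    have hC : 0 < 1 - eta * (Pplus + lam * (1 - Pplus)) := by
      rw [hPstar, div_lt_iff₀ hden] at hP
      nlinarith
    have := key q' hAq
    rw [hm'val] at this
    nlinarith [mul_pos (mul_pos hε (by linarith : (0:ℝ) < u k - u l)) hC]
  · intro hP ε hε q' hq' hAq
    have hm'val : (∑ s, q' s * u s) = m - ε * (u k - u l) := by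
      have hpt : ∀ s : Fin S, q' s * u s
          = q s * u s - (if s = k then ε * u s else 0) + (if s = l then ε * u s else 0) := by
        intro s
        by_cases h1 : s = k
        · subst h1; rw [hq']; simp [hkl]; ring
        · by_cases h2 : s = l
          · subst h2; rw [hq']; simp [h1]; ring
          · rw [hq']; simp [h1, h2]
      rw [Finset.sum_congr rfl fun s _ => hpt s]
      rw [Finset.sum_add_distrib, Finset.sum_sub_distrib,
        Finset.sum_ite_eq' Finset.univ k (fun s => ε * u s),
        Finset.sum_ite_eq' Finset.univ l (fun s => ε * u s)]
      simp [hm]; ring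
    have hC : 1 - eta * (Pplus + lam * (1 - Pplus)) < 0 := by
      rw [hPstar, lt_div_iff₀ hden] at hP
      nlinarith
    have := key q' hAq
    rw [hm'val] at this
    nlinarith [mul_pos (mul_pos hε (by linarith : (0:ℝ) < u k - u l)) (by linarith : (0:ℝ) < -(1 - eta * (Pplus + lam * (1 - Pplus))))]
end

section
/- Let f_A, f_B be probability densities on ℝ with equal means and finite first moments, λ > 1, 0 < η < 1, and let m_A, m_B satisfy ∫_{−∞}^{m_A} f_A = ∫_{−∞}^{m_B} f_B = (1−η)/(η(λ−1)). Then the sophisticated agent's utility from lottery A exceeds that from B, i.e. m_A + ηE_{f_A}μ(Z − m_A) > m_B + ηE_{f_B}μ(Z − m_B), if and only if ∫_{−∞}^{m_A} f_A(Z) Z dZ > ∫_{−∞}^{m_B} f_B(Z) Z dZ. -/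
/- At the optimal anticipation `m` the loss probability makes the `m`-terms of
`m + η ∫ f(Z) μ(Z - m)` cancel, leaving `η E_f(Z) + η(λ-1) ∫_{-∞}^m f(Z) Z dZ`; with equal means
the comparison of utilities is thus the comparison of the partial first moments below `m`. -/

open MeasureTheory Set

lemma mu_sub_eq_add_indicator (lam z m : ℝ) :
    mu lam (z - m) = (z - m) + (lam - 1) * (Iio m).indicator (fun z => z - m) z := by
  unfold mu
  by_cases h : z < m
  · rw [if_neg (by linarith), indicator_of_mem (mem_Iio.2 h)]
    ring
  · rw [if_pos (by linarith), indicator_of_notMem (by simpa using h)]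
    ring

lemma integral_mul_mu_sub {μ : Measure ℝ} {f : ℝ → ℝ} (hf : Integrable f μ)
    (hfz : Integrable (fun z => f z * z) μ) (lam m : ℝ) :
    ∫ z, f z * mu lam (z - m) ∂μ =
      (∫ z, f z * z ∂μ) - m * (∫ z, f z ∂μ) +
        (lam - 1) * ((∫ z in Iio m, f z * z ∂μ) - m * ∫ z in Iio m, f z ∂μ) := by
  have hsub : (fun z => f z * (z - m)) = fun z => f z * z - f z * m := by
    funext z; ring
  have hfzm : Integrable (fun z => f z * (z - m)) μ := hsub ▸ hfz.sub (hf.mul_const m)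
  have hpt : (fun z => f z * mu lam (z - m)) = fun z =>
      f z * (z - m) + (lam - 1) * (Iio m).indicator (fun z => f z * (z - m)) z := by
    funext z
    rw [mu_sub_eq_add_indicator, indicator_mul_right (g := fun z => z - m)]
    ring
  rw [hpt, integral_add hfzm ((hfzm.indicator measurableSet_Iio).const_mul _),
    integral_const_mul, integral_indicator measurableSet_Iio, hsub,
    integral_sub hfz (hf.mul_const m), integral_sub hfz.integrableOn (hf.mul_const m).integrableOn,
    integral_mul_const, integral_mul_const]
  ring

lemma utility_eq_of_loss_prob {f : ℝ → ℝ} {lam eta m : ℝ} (hlam : lam ≠ 1) (heta : eta ≠ 0)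
    (hf : Integrable f) (hf_total : ∫ z, f z = 1) (hfz : Integrable (fun z => f z * z))
    (hloss : ∫ z in Iio m, f z = (1 - eta) / (eta * (lam - 1))) :
    m + eta * (∫ z, f z * mu lam (z - m)) =
      eta * (∫ z, f z * z) + eta * (lam - 1) * ∫ z in Iio m, f z * z := by
  have hlam' : lam - 1 ≠ 0 := sub_ne_zero.2 hlam
  rw [integral_mul_mu_sub hf hfz, hf_total, hloss]
  field_simp
  ring

theorem stmt_10_general (fA fB : ℝ → ℝ) (lam eta mA mB : ℝ) (hlam : 1 < lam)
    (heta0 : 0 < eta)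
    (hfA_int : Integrable fA) (hfB_int : Integrable fB)
    (hfA_total : ∫ z, fA z = 1) (hfB_total : ∫ z, fB z = 1)
    (hfAz_int : Integrable (fun z => fA z * z))
    (hfBz_int : Integrable (fun z => fB z * z))
    (hmean : ∫ z, fA z * z = ∫ z, fB z * z)
    (hlossA : ∫ z in Iio mA, fA z = (1 - eta) / (eta * (lam - 1)))
    (hlossB : ∫ z in Iio mB, fB z = (1 - eta) / (eta * (lam - 1))) :
    mB + eta * (∫ z, fB z * mu lam (z - mB)) <
        mA + eta * (∫ z, fA z * mu lam (z - mA)) ↔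
      (∫ z in Iio mB, fB z * z) < ∫ z in Iio mA, fA z * z := by
  rw [utility_eq_of_loss_prob hlam.ne' heta0.ne' hfA_int hfA_total hfAz_int hlossA,
    utility_eq_of_loss_prob hlam.ne' heta0.ne' hfB_int hfB_total hfBz_int hlossB, hmean,
    add_lt_add_iff_left]
  exact mul_lt_mul_iff_right₀ (mul_pos heta0 (sub_pos.2 hlam))

/-- For two equal-mean lotteries evaluated by a sophisticated agent at
optimal anticipations (loss probability (1−η)/(η(λ−1))), A is strictly
preferred to B iff ∫_{−∞}^{m_A} f_A(Z)Z dZ > ∫_{−∞}^{m_B} f_B(Z)Z dZ. -/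
theorem stmt_10 (fA fB : ℝ → ℝ) (lam eta mA mB : ℝ) (hlam : 1 < lam)
    (heta0 : 0 < eta) (heta1 : eta < 1)
    (hfA_nonneg : ∀ z, 0 ≤ fA z) (hfB_nonneg : ∀ z, 0 ≤ fB z)
    (hfA_int : Integrable fA) (hfB_int : Integrable fB)
    (hfA_total : ∫ z, fA z = 1) (hfB_total : ∫ z, fB z = 1)
    (hfAz_int : Integrable (fun z => fA z * z))
    (hfBz_int : Integrable (fun z => fB z * z))
    (hmean : ∫ z, fA z * z = ∫ z, fB z * z)
    (hmuA_int : Integrable (fun z => fA z * mu lam (z - mA)))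
    (hmuB_int : Integrable (fun z => fB z * mu lam (z - mB)))
    (hlossA : ∫ z in Iio mA, fA z = (1 - eta) / (eta * (lam - 1)))
    (hlossB : ∫ z in Iio mB, fB z = (1 - eta) / (eta * (lam - 1))) :
    mB + eta * (∫ z, fB z * mu lam (z - mB)) <
        mA + eta * (∫ z, fA z * mu lam (z - mA)) ↔
      (∫ z in Iio mB, fB z * z) < ∫ z in Iio mA, fA z * z :=
  stmt_10_general fA fB lam eta mA mB hlam heta0 hfA_int hfB_int hfA_total hfB_total hfAz_int
    hfBz_int hmean hlossA hlossB
end
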